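/- arXiv:2105.12033 — 3 statements merged into one kernel-verified Lean document; each statement's English description precedes it below -/
import Mathlib

section
/- Let α₁ > 0 and α₂ > 0. Define the naive purely data-driven DNN training loss L(W, b) = (1/2)·‖P − (W·Y + b·𝟙ᵀ)‖² + (α₁/2)·‖W‖² + (α₂/2)·‖b‖² for W ∈ ℝ^{m×n} and b ∈ ℝ^m. Let M = I_{nt} − (1/(nt + α₂))·𝟙·𝟙ᵀ ∈ ℝ^{nt×nt}. Then the matrix Y·M·Yᵀ + α₁·I_n is invertible, and the pair W⁰ = P·M·Yᵀ·(Y·M·Yᵀ + α₁·I_n)⁻¹, b⁰ = (1/(1 + α₂/nt))·(ū − W⁰·ȳ) is the unique global minimizer of L. -/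
open Matrix

/-- Squared Frobenius norm of a real matrix: `‖X‖² = tr(Xᵀ X)`. -/
noncomputable def frobSq {k l : ℕ} (X : Matrix (Fin k) (Fin l) ℝ) : ℝ :=
  Matrix.trace (Xᵀ * X)

/-!
The loss is a strictly convex quadratic in `(W, b)`, so a critical point is its unique global
minimizer. Expanding around `(W, b)` with residual `E = P - (W Y + b 𝟙ᵀ)`, the increment is
`½‖ΔW Y + Δb 𝟙ᵀ‖² + (α₁/2)‖ΔW‖² + (α₂/2)‖Δb‖²` plus linear terms which vanish exactly when the
normal equations `E Yᵀ = α₁ W` and `E 𝟙 = α₂ b` hold. For the closed form, `b⁰` is the bias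
that makes `E = (P - W⁰ Y) M`; since `M 𝟙 = α₂ (nt + α₂)⁻¹ 𝟙` this gives `E 𝟙 = α₂ b⁰`, and the
defining equation `W⁰ (Y M Yᵀ + α₁ I) = P M Yᵀ` gives `E Yᵀ = α₁ W⁰`.
Invertibility: by Cauchy–Schwarz `(𝟙ᵀ x)² ≤ nt ‖x‖²`, so `M` is positive semidefinite and
`Y M Yᵀ + α₁ I` is positive definite.
-/

section FrobeniusNorm

variable {k l : ℕ}

theorem frobSq_nonneg (X : Matrix (Fin k) (Fin l) ℝ) : 0 ≤ frobSq X :=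
  (posSemidef_conjTranspose_mul_self X).trace_nonneg

theorem frobSq_pos {X : Matrix (Fin k) (Fin l) ℝ} (hX : X ≠ 0) : 0 < frobSq X :=
  (frobSq_nonneg X).lt_of_ne' (trace_conjTranspose_mul_self_eq_zero_iff.not.mpr hX)

theorem frobSq_neg (X : Matrix (Fin k) (Fin l) ℝ) : frobSq (-X) = frobSq X := by
  simp [frobSq]

theorem frobSq_add (X Z : Matrix (Fin k) (Fin l) ℝ) :
    frobSq (X + Z) = frobSq X + 2 * (Xᵀ * Z).trace + frobSq Z := by
  have hsymm : (Zᵀ * X).trace = (Xᵀ * Z).trace := by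
    rw [← trace_transpose, transpose_mul, transpose_transpose]
  simp only [frobSq, transpose_add, Matrix.add_mul, Matrix.mul_add, trace_add, hsymm]
  ring

end FrobeniusNorm

section Centering

variable {ι : Type*} [Fintype ι] [DecidableEq ι]

theorem posSemidef_one_sub_smul_vecMulVec_one {c : ℝ} (hcard : c * Fintype.card ι ≤ 1) :
    (1 - c • vecMulVec (1 : ι → ℝ) 1).PosSemidef := by
  refine .of_dotProduct_mulVec_nonneg (.ext fun i j => ?_) fun x => ?_
  · simp [one_apply, eq_comm]
  have hcs : (∑ i, x i) ^ 2 ≤ Fintype.card ι * ∑ i, x i ^ 2 := sq_sum_le_card_mul_sum_sq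
  have hsq : 0 ≤ ∑ i, x i ^ 2 := Finset.sum_nonneg fun i _ => sq_nonneg (x i)
  have hform : star x ⬝ᵥ ((1 - c • vecMulVec 1 1) *ᵥ x) =
      ∑ i, x i ^ 2 - c * (∑ i, x i) ^ 2 := by
    rw [star_trivial, sub_mulVec, one_mulVec, smul_mulVec, dotProduct_sub, dotProduct_smul,
      dotProduct_mulVec, vecMul_vecMulVec, smul_dotProduct, dotProduct_one, one_dotProduct]
    simp [dotProduct, sq]
  rw [hform]
  rcases le_total c 0 with hc | hc
  · nlinarith [sq_nonneg (∑ i, x i)]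
  · nlinarith

theorem one_sub_smul_vecMulVec_one_mulVec_one (c : ℝ) :
    (1 - c • vecMulVec 1 1 : Matrix ι ι ℝ) *ᵥ 1 = (1 - c * Fintype.card ι) • 1 := by
  rw [sub_mulVec, one_mulVec, smul_mulVec, vecMulVec_mulVec, dotProduct_one]
  ext i
  simp

theorem mul_one_sub_smul_vecMulVec_one {κ : Type*} (R : Matrix κ ι ℝ) (c : ℝ) :
    R * (1 - c • vecMulVec (1 : ι → ℝ) 1) = R - vecMulVec (c • (R *ᵥ 1)) 1 := by
  rw [Matrix.mul_sub, Matrix.mul_one, Matrix.mul_smul, mul_vecMulVec, smul_vecMulVec]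

end Centering

theorem isUnit_mul_mul_transpose_add_smul_one {ι κ : Type*} [Fintype ι] [Fintype κ]
    [DecidableEq κ] {M : Matrix ι ι ℝ} (hM : M.PosSemidef) (Y : Matrix κ ι ℝ) {α : ℝ}
    (hα : 0 < α) : IsUnit (Y * M * Yᵀ + α • 1) :=
  conjTranspose_eq_transpose_of_trivial Y ▸
    (PosDef.posSemidef_add (hM.mul_mul_conjTranspose_same Y) (PosDef.one.smul hα)).isUnit

section RidgeRegression

variable {m n nt : ℕ} (P : Matrix (Fin m) (Fin nt) ℝ) (Y : Matrix (Fin n) (Fin nt) ℝ)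
  (α₁ α₂ : ℝ)

def ridgeResidual (W : Matrix (Fin m) (Fin n) ℝ) (b : Fin m → ℝ) : Matrix (Fin m) (Fin nt) ℝ :=
  P - (W * Y + vecMulVec b 1)

noncomputable def ridgeLoss (W : Matrix (Fin m) (Fin n) ℝ) (b : Fin m → ℝ) : ℝ :=
  (1 / 2) * frobSq (ridgeResidual P Y W b) + (α₁ / 2) * frobSq W + (α₂ / 2) * (b ⬝ᵥ b)

theorem trace_transpose_mul_mul_add_vecMulVec (E : Matrix (Fin m) (Fin nt) ℝ)
    (DW : Matrix (Fin m) (Fin n) ℝ) (Db : Fin m → ℝ) :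
    (Eᵀ * (DW * Y + vecMulVec Db 1)).trace = ((E * Yᵀ)ᵀ * DW).trace + (E *ᵥ 1) ⬝ᵥ Db := by
  rw [Matrix.mul_add, trace_add, mul_vecMulVec, trace_vecMulVec, transpose_mul,
    transpose_transpose, ← Matrix.mul_assoc, trace_mul_cycle, dotProduct_comm, dotProduct_mulVec,
    vecMul_transpose]

theorem ridgeLoss_add (W DW : Matrix (Fin m) (Fin n) ℝ) (b Db : Fin m → ℝ) :
    ridgeLoss P Y α₁ α₂ (W + DW) (b + Db) =
      ridgeLoss P Y α₁ α₂ W b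
        - ((ridgeResidual P Y W b * Yᵀ - α₁ • W)ᵀ * DW).trace
        - (ridgeResidual P Y W b *ᵥ 1 - α₂ • b) ⬝ᵥ Db
        + ((1 / 2) * frobSq (DW * Y + vecMulVec Db 1) + (α₁ / 2) * frobSq DW
          + (α₂ / 2) * (Db ⬝ᵥ Db)) := by
  have hres : ridgeResidual P Y (W + DW) (b + Db) =
      ridgeResidual P Y W b + -(DW * Y + vecMulVec Db 1) := by
    simp only [ridgeResidual, Matrix.add_mul, add_vecMulVec]
    abel
  simp only [ridgeLoss, hres, frobSq_add, frobSq_neg, Matrix.mul_neg, trace_neg,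
    trace_transpose_mul_mul_add_vecMulVec, add_dotProduct, dotProduct_add, transpose_sub,
    transpose_smul, Matrix.sub_mul, Matrix.smul_mul, trace_sub, trace_smul, sub_dotProduct,
    smul_dotProduct, dotProduct_comm Db b, smul_eq_mul]
  ring

theorem ridgeLoss_lt_of_normal_eqs (hα₁ : 0 < α₁) (hα₂ : 0 < α₂)
    {W : Matrix (Fin m) (Fin n) ℝ} {b : Fin m → ℝ}
    (hW : ridgeResidual P Y W b * Yᵀ = α₁ • W) (hb : ridgeResidual P Y W b *ᵥ 1 = α₂ • b)
    {W' : Matrix (Fin m) (Fin n) ℝ} {b' : Fin m → ℝ} (hne : (W', b') ≠ (W, b)) :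
    ridgeLoss P Y α₁ α₂ W b < ridgeLoss P Y α₁ α₂ W' b' := by
  obtain ⟨DW, rfl⟩ : ∃ DW, W' = W + DW := ⟨W' - W, by abel⟩
  obtain ⟨Db, rfl⟩ : ∃ Db, b' = b + Db := ⟨b' - b, by abel⟩
  rw [ridgeLoss_add, hW, hb, sub_self, sub_self, transpose_zero, Matrix.zero_mul, trace_zero,
    zero_dotProduct, sub_zero, sub_zero, lt_add_iff_pos_right]
  have hD := frobSq_nonneg (DW * Y + vecMulVec Db 1)
  have hDW := frobSq_nonneg DW
  have hDb : 0 ≤ Db ⬝ᵥ Db := dotProduct_self_star_nonneg Db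
  rcases eq_or_ne DW 0 with rfl | hDW_ne
  · have hDb_ne : Db ≠ 0 := fun h => hne (by simp [h])
    have hDb_pos : 0 < Db ⬝ᵥ Db := dotProduct_self_star_pos_iff.mpr hDb_ne
    nlinarith
  · nlinarith [frobSq_pos hDW_ne]

end RidgeRegression

theorem nDNN_unique_global_minimizer_general
    {m n nt : ℕ} (hnt : 0 < nt)
    (P : Matrix (Fin m) (Fin nt) ℝ) (Y : Matrix (Fin n) (Fin nt) ℝ)
    (α₁ α₂ : ℝ) (hα₁ : 0 < α₁) (hα₂ : 0 < α₂)
    (L : Matrix (Fin m) (Fin n) ℝ → (Fin m → ℝ) → ℝ)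
    (hL : ∀ W b, L W b =
      (1 / 2) * frobSq (P - (W * Y + vecMulVec b 1)) +
      (α₁ / 2) * frobSq W + (α₂ / 2) * ∑ i, (b i) ^ 2)
    (M : Matrix (Fin nt) (Fin nt) ℝ)
    (hM : M = 1 - ((nt : ℝ) + α₂)⁻¹ • vecMulVec 1 1)
    (ubar : Fin m → ℝ) (hubar : ubar = (nt : ℝ)⁻¹ • (P *ᵥ 1))
    (ybar : Fin n → ℝ) (hybar : ybar = (nt : ℝ)⁻¹ • (Y *ᵥ 1))
    (W0 : Matrix (Fin m) (Fin n) ℝ)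
    (hW0 : W0 = P * M * Yᵀ * (Y * M * Yᵀ + α₁ • 1)⁻¹)
    (b0 : Fin m → ℝ)
    (hb0 : b0 = (1 + α₂ / (nt : ℝ))⁻¹ • (ubar - W0 *ᵥ ybar)) :
    IsUnit (Y * M * Yᵀ + α₁ • (1 : Matrix (Fin n) (Fin n) ℝ)) ∧
    ∀ W b, (W, b) ≠ (W0, b0) → L W0 b0 < L W b := by
  have hnt' : (0 : ℝ) < nt := Nat.cast_pos.mpr hnt
  have hU : IsUnit (Y * M * Yᵀ + α₁ • (1 : Matrix (Fin n) (Fin n) ℝ)) :=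
    isUnit_mul_mul_transpose_add_smul_one (hM ▸ posSemidef_one_sub_smul_vecMulVec_one
      (by rw [Fintype.card_fin, inv_mul_le_iff₀ (by positivity)]; linarith)) Y hα₁
  have hb0' : b0 = ((nt : ℝ) + α₂)⁻¹ • ((P - W0 * Y) *ᵥ 1) := by
    rw [hb0, hubar, hybar, mulVec_smul, ← smul_sub, smul_smul, sub_mulVec, mulVec_mulVec]
    congr 1
    field_simp
  have hres : ridgeResidual P Y W0 b0 = (P - W0 * Y) * M := by
    rw [hM, mul_one_sub_smul_vecMulVec_one, ← hb0', ridgeResidual, sub_add_eq_sub_sub]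
  have hW : ridgeResidual P Y W0 b0 * Yᵀ = α₁ • W0 := by
    have hnormal : W0 * (Y * M * Yᵀ + α₁ • 1) = P * M * Yᵀ := by
      rw [hW0, nonsing_inv_mul_cancel_right _ _ ((isUnit_iff_isUnit_det _).mp hU)]
    rw [hres, Matrix.sub_mul, Matrix.sub_mul, ← hnormal, Matrix.mul_add, Matrix.mul_smul,
      Matrix.mul_one]
    simp only [Matrix.mul_assoc]
    abel
  have hb : ridgeResidual P Y W0 b0 *ᵥ 1 = α₂ • b0 := by
    rw [hres, ← mulVec_mulVec, hM, one_sub_smul_vecMulVec_one_mulVec_one, mulVec_smul, hb0',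
      smul_smul, Fintype.card_fin]
    congr 1
    field_simp
    ring
  have hL' : L = ridgeLoss P Y α₁ α₂ :=
    funext₂ fun W b => by simp only [hL, ridgeLoss, ridgeResidual, dotProduct, sq]
  exact ⟨hU, fun W b hne => hL' ▸ ridgeLoss_lt_of_normal_eqs P Y α₁ α₂ hα₁ hα₂ hW hb hne⟩

/-- The pair `(W⁰, b⁰)` is the unique global minimizer of the naive
purely data-driven DNN training loss, and `Y M Yᵀ + α₁ I` is invertible. -/
theorem nDNN_unique_global_minimizer
    {m n nt : ℕ} (hm : 0 < m) (hn : 0 < n) (hnt : 0 < nt)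
    (P : Matrix (Fin m) (Fin nt) ℝ) (Y : Matrix (Fin n) (Fin nt) ℝ)
    (α₁ α₂ : ℝ) (hα₁ : 0 < α₁) (hα₂ : 0 < α₂)
    (L : Matrix (Fin m) (Fin n) ℝ → (Fin m → ℝ) → ℝ)
    (hL : ∀ W b, L W b =
      (1 / 2) * frobSq (P - (W * Y + vecMulVec b 1)) +
      (α₁ / 2) * frobSq W + (α₂ / 2) * ∑ i, (b i) ^ 2)
    (M : Matrix (Fin nt) (Fin nt) ℝ)
    (hM : M = 1 - ((nt : ℝ) + α₂)⁻¹ • vecMulVec 1 1)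
    (ubar : Fin m → ℝ) (hubar : ubar = (nt : ℝ)⁻¹ • (P *ᵥ 1))
    (ybar : Fin n → ℝ) (hybar : ybar = (nt : ℝ)⁻¹ • (Y *ᵥ 1))
    (W0 : Matrix (Fin m) (Fin n) ℝ)
    (hW0 : W0 = P * M * Yᵀ * (Y * M * Yᵀ + α₁ • 1)⁻¹)
    (b0 : Fin m → ℝ)
    (hb0 : b0 = (1 + α₂ / (nt : ℝ))⁻¹ • (ubar - W0 *ᵥ ybar)) :
    IsUnit (Y * M * Yᵀ + α₁ • (1 : Matrix (Fin n) (Fin n) ℝ)) ∧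
    ∀ W b, (W, b) ≠ (W0, b0) → L W0 b0 < L W b :=
  nDNN_unique_global_minimizer_general hnt P Y α₁ α₂ hα₁ hα₂ L hL M hM ubar hubar ybar hybar W0 hW0
    b0 hb0
end

section
/- Let Γ ∈ ℝ^{m×m} and Λ ∈ ℝ^{n×n} be symmetric positive definite, α ≥ 0, and define the model-constrained DNN training loss L(W, b) = (1/2)·‖P − (W·Y + b·𝟙ᵀ)‖²_{Γ⁻¹} + (α/2)·‖Y − G·(W·Y + b·𝟙ᵀ)‖²_{Λ⁻¹} for W ∈ ℝ^{m×n}, b ∈ ℝ^m. Let A = Γ⁻¹ + α·Gᵀ·Λ⁻¹·G (which is invertible), and let Yd ∈ ℝ^{nt×n} be a Moore–Penrose pseudoinverse of Ȳ. Then the pair Wᴵ = A⁻¹·(Γ⁻¹·P̄·Yd + α·Gᵀ·Λ⁻¹·Ȳ·Yd), bᴵ = A⁻¹·(Γ⁻¹·ū + α·Gᵀ·Λ⁻¹·ȳ − (Γ⁻¹·P̄·Yd + α·Gᵀ·Λ⁻¹·Ȳ·Yd)·ȳ) is a global minimizer of L. -/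
/-!
The loss depends on `(W, b)` only through `U = W Y + b 𝟙ᵀ` and is a convex quadratic in `U`.
Writing `U = U₀ + V` with `U₀ = Wᴵ Y + bᴵ 𝟙ᵀ`,
`L = L(U₀) - tr(Vᵀ R) + ½‖V‖²_{Γ⁻¹} + (α/2)‖G V‖²_{Λ⁻¹}`
with `R = Γ⁻¹ (P - U₀) + α Gᵀ Λ⁻¹ (Y - G U₀)`. Since `A Wᴵ` and `A bᴵ` are the right-hand sides
of the normal equations, `R` collapses to `Γ⁻¹ (P̄ - P̄ Yd Ȳ)`. The Penrose identities
`Ȳ Yd Ȳ = Ȳ` and `(Yd Ȳ)ᵀ = Yd Ȳ` give `Yd Ȳ Ȳᵀ = Ȳᵀ`, and centering gives `P̄ 𝟙 = Ȳ 𝟙 = 0`;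
hence `R Yᵀ = 0` and `R 𝟙 = 0`, so the linear term vanishes for every `V = ΔW Y + Δb 𝟙ᵀ`.
-/

open Matrix

/-- Weighted squared norm of a matrix: `‖X‖²_A = tr(Xᵀ A X)`. -/
noncomputable def wnormSq {k l : ℕ} (A : Matrix (Fin k) (Fin k) ℝ)
    (X : Matrix (Fin k) (Fin l) ℝ) : ℝ :=
  Matrix.trace (Xᵀ * A * X)

namespace Matrix

variable {R : Type*} {m n ι : Type*}

theorem sub_vecMulVec_mean_mulVec_one {K : Type*} [Field K] [CharZero K] [Fintype ι]
    (X : Matrix m ι K) :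
    (X - vecMulVec ((Fintype.card ι : K)⁻¹ • (X *ᵥ 1)) 1) *ᵥ 1 = 0 := by
  rcases isEmpty_or_nonempty ι with hι | hι
  · ext i; simp [mulVec, dotProduct]
  · have hcard : (Fintype.card ι : K) ≠ 0 := Nat.cast_ne_zero.mpr Fintype.card_ne_zero
    rw [sub_mulVec, vecMulVec_mulVec, op_smul_eq_smul, smul_smul]
    simp [hcard]

variable [CommRing R]

theorem mul_transpose_eq_transpose_of_penrose [Fintype n] [Fintype ι]
    {Y : Matrix n ι R} {Yd : Matrix ι n R}
    (h1 : Y * Yd * Y = Y) (h4 : (Yd * Y)ᵀ = Yd * Y) : Yd * Y * Yᵀ = Yᵀ := by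
  rw [← h4, ← transpose_mul, ← Matrix.mul_assoc, h1]

theorem sub_mul_mul_mul_transpose_eq_zero [Fintype n] [Fintype ι]
    {Y : Matrix n ι R} {Yd : Matrix ι n R}
    (h1 : Y * Yd * Y = Y) (h4 : (Yd * Y)ᵀ = Yd * Y) (X : Matrix m ι R) :
    (X - X * Yd * Y) * Yᵀ = 0 := by
  rw [Matrix.sub_mul, Matrix.mul_assoc X, Matrix.mul_assoc X,
    mul_transpose_eq_transpose_of_penrose h1 h4, sub_self]

theorem sub_mul_mul_mulVec_eq_zero [Fintype n] [Fintype ι]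
    {X : Matrix m ι R} {Y : Matrix n ι R} (Yd : Matrix ι n R) {v : ι → R}
    (hX : X *ᵥ v = 0) (hY : Y *ᵥ v = 0) : (X - X * Yd * Y) *ᵥ v = 0 := by
  rw [sub_mulVec, ← mulVec_mulVec, hY, mulVec_zero, hX, sub_zero]

theorem mul_transpose_eq_zero_of_sub_vecMulVec [Fintype ι] {C : Matrix m ι R} {Y : Matrix n ι R}
    {y : n → R} {v : ι → R} (hY : C * (Y - vecMulVec y v)ᵀ = 0) (hv : C *ᵥ v = 0) :
    C * Yᵀ = 0 := by
  rwa [transpose_sub, transpose_vecMulVec, Matrix.mul_sub, mul_vecMulVec, hv, zero_vecMulVec,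
    sub_zero] at hY

theorem trace_transpose_mul_eq_zero [Fintype m] [Fintype n] [Fintype ι]
    {C : Matrix m ι R} {Y : Matrix n ι R} {v : ι → R}
    (hY : C * Yᵀ = 0) (hv : C *ᵥ v = 0) (W : Matrix m n R) (c : m → R) :
    trace ((W * Y + vecMulVec c v)ᵀ * C) = 0 := by
  rw [trace_mul_comm, transpose_add, transpose_mul, transpose_vecMulVec, Matrix.mul_add,
    ← Matrix.mul_assoc, hY, mul_vecMulVec, hv]
  simp

end Matrix

theorem weighted_residual_eq {R m n ι : Type*} [CommRing R] [Fintype m] [DecidableEq m]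
    [Fintype n] [Fintype ι]
    {S A : Matrix m m R} {B : Matrix m n R} {G : Matrix n m R} {α : R}
    (hA : A = S + α • (B * G)) (hAdet : IsUnit A.det)
    {P Pbar : Matrix m ι R} {Y Ybar : Matrix n ι R} {Yd : Matrix ι n R}
    {u : m → R} {y : n → R} {v : ι → R}
    (hPbar : Pbar = P - vecMulVec u v) (hYbar : Ybar = Y - vecMulVec y v)
    (h1 : Ybar * Yd * Ybar = Ybar) {W : Matrix m n R} {b : m → R}
    (hW : W = A⁻¹ * (S * Pbar * Yd + α • (B * Ybar * Yd)))
    (hb : b = A⁻¹ *ᵥ (S *ᵥ u + α • (B *ᵥ y) - (S * Pbar * Yd + α • (B * Ybar * Yd)) *ᵥ y)) :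
    S * (P - (W * Y + vecMulVec b v)) + α • (B * (Y - G * (W * Y + vecMulVec b v))) =
      S * (Pbar - Pbar * Yd * Ybar) := by
  set M := S * Pbar * Yd + α • (B * Ybar * Yd)
  have hAW : A * W = M := by rw [hW, mul_nonsing_inv_cancel_left _ _ hAdet]
  have hAb : A *ᵥ b = S *ᵥ u + α • (B *ᵥ y) - M *ᵥ y := by
    rw [hb, mulVec_mulVec, mul_nonsing_inv _ hAdet, one_mulVec]
  have hMY : M * Ybar = S * (Pbar * Yd * Ybar) + α • (B * Ybar) := by
    simp only [M, Matrix.add_mul, Matrix.smul_mul, Matrix.mul_assoc, h1]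
  have hP : P = Pbar + vecMulVec u v := by rw [hPbar, sub_add_cancel]
  have hY : Y = Ybar + vecMulVec y v := by rw [hYbar, sub_add_cancel]
  calc S * (P - (W * Y + vecMulVec b v)) + α • (B * (Y - G * (W * Y + vecMulVec b v)))
      = S * P + α • (B * Y) - (A * W * Y + vecMulVec (A *ᵥ b) v) := by
        rw [hA]
        simp only [Matrix.mul_sub, Matrix.mul_add, Matrix.add_mul, Matrix.smul_mul,
          mul_vecMulVec, add_mulVec, smul_mulVec, Matrix.mul_assoc, ← mulVec_mulVec,
          smul_vecMulVec, add_vecMulVec]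
        module
    _ = S * Pbar + α • (B * Ybar) - M * Ybar := by
        rw [hAW, hAb, hP, hY]
        simp only [Matrix.mul_add, mul_vecMulVec, sub_vecMulVec, add_vecMulVec, smul_vecMulVec,
          smul_add]
        abel
    _ = S * (Pbar - Pbar * Yd * Ybar) := by
        rw [hMY, Matrix.mul_sub]
        abel

theorem wnormSq_nonneg {k l : ℕ} {A : Matrix (Fin k) (Fin k) ℝ} (hA : A.PosSemidef)
    (X : Matrix (Fin k) (Fin l) ℝ) : 0 ≤ wnormSq A X := by
  simpa [wnormSq] using (hA.conjTranspose_mul_mul_same X).trace_nonneg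

theorem wnormSq_sub {k l : ℕ} {A : Matrix (Fin k) (Fin k) ℝ} (hA : A.IsSymm)
    (X V : Matrix (Fin k) (Fin l) ℝ) :
    wnormSq A (X - V) = wnormSq A X - 2 * trace (Vᵀ * A * X) + wnormSq A V := by
  have hcross : trace (Xᵀ * A * V) = trace (Vᵀ * A * X) := by
    rw [← trace_transpose, transpose_mul, transpose_mul, transpose_transpose, hA.eq,
      Matrix.mul_assoc]
  simp only [wnormSq, transpose_sub, Matrix.sub_mul, Matrix.mul_sub, trace_sub, hcross]
  ring

theorem quadratic_loss_le_of_trace_eq_zero {m n nt : ℕ} {S : Matrix (Fin m) (Fin m) ℝ}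
    {T : Matrix (Fin n) (Fin n) ℝ} (hS : S.PosSemidef) (hT : T.PosSemidef)
    {α : ℝ} (hα : 0 ≤ α)
    (P U V : Matrix (Fin m) (Fin nt) ℝ) (Y : Matrix (Fin n) (Fin nt) ℝ)
    (G : Matrix (Fin n) (Fin m) ℝ)
    (hV : trace (Vᵀ * (S * (P - U) + α • (Gᵀ * T * (Y - G * U)))) = 0) :
    (1 / 2) * wnormSq S (P - U) + (α / 2) * wnormSq T (Y - G * U) ≤
      (1 / 2) * wnormSq S (P - (U + V)) + (α / 2) * wnormSq T (Y - G * (U + V)) := by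
  have hcross : trace (Vᵀ * S * (P - U)) + α * trace ((G * V)ᵀ * T * (Y - G * U)) = 0 := by
    simpa only [Matrix.mul_add, Matrix.mul_smul, trace_add, trace_smul, smul_eq_mul,
      transpose_mul, Matrix.mul_assoc] using hV
  rw [sub_add_eq_sub_sub, Matrix.mul_add, sub_add_eq_sub_sub,
    wnormSq_sub (isHermitian_iff_isSymm.mp hS.isHermitian) (P - U) V,
    wnormSq_sub (isHermitian_iff_isSymm.mp hT.isHermitian) (Y - G * U) (G * V)]
  nlinarith [wnormSq_nonneg hS V, mul_nonneg hα (wnormSq_nonneg hT (G * V))]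

theorem mcDNN_global_minimizer_general
    {m n nt : ℕ}
    (P : Matrix (Fin m) (Fin nt) ℝ) (Y : Matrix (Fin n) (Fin nt) ℝ)
    (G : Matrix (Fin n) (Fin m) ℝ)
    (Gam : Matrix (Fin m) (Fin m) ℝ) (Lam : Matrix (Fin n) (Fin n) ℝ)
    (hGam : Gam.PosDef) (hLam : Lam.PosDef)
    (α : ℝ) (hα : 0 ≤ α)
    (L : Matrix (Fin m) (Fin n) ℝ → (Fin m → ℝ) → ℝ)
    (hL : ∀ W b, L W b =
      (1 / 2) * wnormSq Gam⁻¹ (P - (W * Y + vecMulVec b 1)) +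
      (α / 2) * wnormSq Lam⁻¹ (Y - G * (W * Y + vecMulVec b 1)))
    (ubar : Fin m → ℝ) (hubar : ubar = (nt : ℝ)⁻¹ • (P *ᵥ 1))
    (ybar : Fin n → ℝ) (hybar : ybar = (nt : ℝ)⁻¹ • (Y *ᵥ 1))
    (Pbar : Matrix (Fin m) (Fin nt) ℝ) (hPbar : Pbar = P - vecMulVec ubar 1)
    (Ybar : Matrix (Fin n) (Fin nt) ℝ) (hYbar : Ybar = Y - vecMulVec ybar 1)
    (Yd : Matrix (Fin nt) (Fin n) ℝ)
    (hYd1 : Ybar * Yd * Ybar = Ybar)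
    (hYd4 : (Yd * Ybar)ᵀ = Yd * Ybar)
    (A : Matrix (Fin m) (Fin m) ℝ) (hA : A = Gam⁻¹ + α • (Gᵀ * Lam⁻¹ * G))
    (WI : Matrix (Fin m) (Fin n) ℝ)
    (hWI : WI = A⁻¹ * (Gam⁻¹ * Pbar * Yd + α • (Gᵀ * Lam⁻¹ * Ybar * Yd)))
    (bI : Fin m → ℝ)
    (hbI : bI = A⁻¹ *ᵥ (Gam⁻¹ *ᵥ ubar + α • ((Gᵀ * Lam⁻¹) *ᵥ ybar)
      - (Gam⁻¹ * Pbar * Yd + α • (Gᵀ * Lam⁻¹ * Ybar * Yd)) *ᵥ ybar)) :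
    ∀ W b, L WI bI ≤ L W b := by
  intro W b
  have hS : (Gam⁻¹).PosSemidef := hGam.inv.posSemidef
  have hT : (Lam⁻¹).PosSemidef := hLam.inv.posSemidef
  have hApos : A.PosDef := by
    have hGTG : (Gᵀ * Lam⁻¹ * G).PosSemidef := by
      simpa only [conjTranspose_eq_transpose_of_trivial] using hT.conjTranspose_mul_mul_same G
    exact hA ▸ hGam.inv.add_posSemidef (hGTG.smul hα)
  have hres := weighted_residual_eq hA ((isUnit_iff_isUnit_det A).mp hApos.isUnit)
    hPbar hYbar hYd1 hWI hbI
  have hP1 : Pbar *ᵥ 1 = 0 := by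
    simpa only [hPbar, hubar, Fintype.card_fin] using sub_vecMulVec_mean_mulVec_one P
  have hY1 : Ybar *ᵥ 1 = 0 := by
    simpa only [hYbar, hybar, Fintype.card_fin] using sub_vecMulVec_mean_mulVec_one Y
  have hC1 : (Pbar - Pbar * Yd * Ybar) *ᵥ 1 = 0 := sub_mul_mul_mulVec_eq_zero Yd hP1 hY1
  have hCY : (Pbar - Pbar * Yd * Ybar) * Yᵀ = 0 := by
    refine mul_transpose_eq_zero_of_sub_vecMulVec (y := ybar) ?_ hC1
    rw [← hYbar]
    exact sub_mul_mul_mul_transpose_eq_zero hYd1 hYd4 Pbar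
  have hsplit : W * Y + vecMulVec b 1 =
      (WI * Y + vecMulVec bI 1) + ((W - WI) * Y + vecMulVec (b - bI) 1) := by
    rw [Matrix.sub_mul, sub_vecMulVec]
    abel
  rw [hL, hL, hsplit]
  refine quadratic_loss_le_of_trace_eq_zero hS hT hα _ _ _ _ _ ?_
  rw [hres]
  refine trace_transpose_mul_eq_zero ?_ ?_ _ _
  · rw [Matrix.mul_assoc, hCY, Matrix.mul_zero]
  · rw [← mulVec_mulVec, hC1, mulVec_zero]

/-- The pair `(Wᴵ, bᴵ)` is a global minimizer of the model-constrained DNN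
training loss for a linear forward map and a linear one-layer network. -/
theorem mcDNN_global_minimizer
    {m n nt : ℕ} (hm : 0 < m) (hn : 0 < n) (hnt : 0 < nt)
    (P : Matrix (Fin m) (Fin nt) ℝ) (Y : Matrix (Fin n) (Fin nt) ℝ)
    (G : Matrix (Fin n) (Fin m) ℝ)
    (Gam : Matrix (Fin m) (Fin m) ℝ) (Lam : Matrix (Fin n) (Fin n) ℝ)
    (hGam : Gam.PosDef) (hLam : Lam.PosDef)
    (α : ℝ) (hα : 0 ≤ α)
    (L : Matrix (Fin m) (Fin n) ℝ → (Fin m → ℝ) → ℝ)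
    (hL : ∀ W b, L W b =
      (1 / 2) * wnormSq Gam⁻¹ (P - (W * Y + vecMulVec b 1)) +
      (α / 2) * wnormSq Lam⁻¹ (Y - G * (W * Y + vecMulVec b 1)))
    (ubar : Fin m → ℝ) (hubar : ubar = (nt : ℝ)⁻¹ • (P *ᵥ 1))
    (ybar : Fin n → ℝ) (hybar : ybar = (nt : ℝ)⁻¹ • (Y *ᵥ 1))
    (Pbar : Matrix (Fin m) (Fin nt) ℝ) (hPbar : Pbar = P - vecMulVec ubar 1)
    (Ybar : Matrix (Fin n) (Fin nt) ℝ) (hYbar : Ybar = Y - vecMulVec ybar 1)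
    (Yd : Matrix (Fin nt) (Fin n) ℝ)
    (hYd1 : Ybar * Yd * Ybar = Ybar) (hYd2 : Yd * Ybar * Yd = Yd)
    (hYd3 : (Ybar * Yd)ᵀ = Ybar * Yd) (hYd4 : (Yd * Ybar)ᵀ = Yd * Ybar)
    (A : Matrix (Fin m) (Fin m) ℝ) (hA : A = Gam⁻¹ + α • (Gᵀ * Lam⁻¹ * G))
    (WI : Matrix (Fin m) (Fin n) ℝ)
    (hWI : WI = A⁻¹ * (Gam⁻¹ * Pbar * Yd + α • (Gᵀ * Lam⁻¹ * Ybar * Yd)))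
    (bI : Fin m → ℝ)
    (hbI : bI = A⁻¹ *ᵥ (Gam⁻¹ *ᵥ ubar + α • ((Gᵀ * Lam⁻¹) *ᵥ ybar)
      - (Gam⁻¹ * Pbar * Yd + α • (Gᵀ * Lam⁻¹ * Ybar * Yd)) *ᵥ ybar)) :
    ∀ W b, L WI bI ≤ L W b :=
  mcDNN_global_minimizer_general P Y G Gam Lam hGam hLam α hα L hL ubar hubar ybar hybar Pbar hPbar
    Ybar hYbar Yd hYd1 hYd4 A hA WI hWI bI hbI
end

section
/- Let Γ ∈ ℝ^{m×m} and Λ ∈ ℝ^{n×n} be symmetric positive definite, α > 0, A = Γ⁻¹ + α·Gᵀ·Λ⁻¹·G, let Yd ∈ ℝ^{nt×n} be a Moore–Penrose pseudoinverse of Ȳ, and define Wᴵ = A⁻¹·(Γ⁻¹·P̄·Yd + α·Gᵀ·Λ⁻¹·Ȳ·Yd) and bᴵ = A⁻¹·(Γ⁻¹·ū + α·Gᵀ·Λ⁻¹·ȳ − (Γ⁻¹·P̄·Yd + α·Gᵀ·Λ⁻¹·Ȳ·Yd)·ȳ). Fix an observational data vector y ∈ ℝ^n and define the data-informed reference parameter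 u₀ = ū + P̄·Yd·(y − ȳ) − α·Γ·Gᵀ·Λ⁻¹·(I_n − Ȳ·Yd)·(y − ȳ). Then the model-constrained DNN inverse solution Wᴵ·y + bᴵ is exactly the unique global minimizer of the Tikhonov-regularized functional F(u) = (1/2)·(y − G·u)ᵀ·Λ⁻¹·(y − G·u) + (1/(2α))·(u − u₀)ᵀ·Γ⁻¹·(u − u₀). -/
/-!
By the choice of `u₀`, the right-hand side `Γ⁻¹ u₀ + α Gᵀ Λ⁻¹ y` of the normal equations
`(Γ⁻¹ + α Gᵀ Λ⁻¹ G) u = Γ⁻¹ u₀ + α Gᵀ Λ⁻¹ y` of `F` is exactly the numerator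
`(Γ⁻¹ P̄ Yd + α Gᵀ Λ⁻¹ Ȳ Yd) (y - ȳ) + Γ⁻¹ ū + α Gᵀ Λ⁻¹ ȳ` of `Wᴵ y + bᴵ`, so `Wᴵ y + bᴵ` is the
stationary point `u*` of `F`. As `F` is quadratic,
`F (u* + d) = F u* + ½ ‖G d‖²_{Λ⁻¹} + (2α)⁻¹ ‖d‖²_{Γ⁻¹}`, and the last term is positive for `d ≠ 0`.
-/

open Matrix

namespace Matrix

variable {ι κ R : Type*} [Fintype ι] [Fintype κ]

theorem IsSymm.dotProduct_mulVec_comm [CommSemiring R] {M : Matrix ι ι R} (hM : M.IsSymm)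
    (x v : ι → R) : x ⬝ᵥ (M *ᵥ v) = v ⬝ᵥ (M *ᵥ x) := by
  simpa only [hM.eq] using dotProduct_transpose_mulVec M x v

theorem IsSymm.add_dotProduct_mulVec_add [CommRing R] {M : Matrix ι ι R} (hM : M.IsSymm)
    (x v : ι → R) :
    (x + v) ⬝ᵥ (M *ᵥ (x + v)) = x ⬝ᵥ (M *ᵥ x) + 2 * (v ⬝ᵥ (M *ᵥ x)) + v ⬝ᵥ (M *ᵥ v) := by
  rw [mulVec_add, dotProduct_add, add_dotProduct, add_dotProduct, hM.dotProduct_mulVec_comm x v]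
  ring

end Matrix

section Tikhonov

variable {ι κ : Type*} [Fintype ι] [Fintype κ]

/-- `L` and `Γ` are the precision matrices, `Λ⁻¹` and `Γ⁻¹` in the paper's notation. -/
noncomputable def tikhonovObjective (L : Matrix κ κ ℝ) (Γ : Matrix ι ι ℝ) (α : ℝ) (G : Matrix κ ι ℝ)
    (y : κ → ℝ) (u₀ : ι → ℝ) (u : ι → ℝ) : ℝ :=
  1 / 2 * ((y - G *ᵥ u) ⬝ᵥ (L *ᵥ (y - G *ᵥ u))) + 1 / (2 * α) * ((u - u₀) ⬝ᵥ (Γ *ᵥ (u - u₀)))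

noncomputable def tikhonovSolution [DecidableEq ι] (L : Matrix κ κ ℝ) (Γ : Matrix ι ι ℝ) (α : ℝ)
    (G : Matrix κ ι ℝ) (y : κ → ℝ) (u₀ : ι → ℝ) : ι → ℝ :=
  (Γ + α • (Gᵀ * L * G))⁻¹ *ᵥ (Γ *ᵥ u₀ + α • ((Gᵀ * L) *ᵥ y))

noncomputable def tikhonovGradient (L : Matrix κ κ ℝ) (Γ : Matrix ι ι ℝ) (α : ℝ)
    (G : Matrix κ ι ℝ) (y : κ → ℝ) (u₀ : ι → ℝ) (u : ι → ℝ) : ι → ℝ :=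
  α⁻¹ • (Γ *ᵥ (u - u₀)) - (Gᵀ * L) *ᵥ (y - G *ᵥ u)

variable {L : Matrix κ κ ℝ} {Γ : Matrix ι ι ℝ} {α : ℝ} {G : Matrix κ ι ℝ} {y : κ → ℝ}
  {u₀ : ι → ℝ}

theorem tikhonovObjective_add (hL : L.IsSymm) (hΓ : Γ.IsSymm) (u d : ι → ℝ) :
    tikhonovObjective L Γ α G y u₀ (u + d) = tikhonovObjective L Γ α G y u₀ u
      + d ⬝ᵥ tikhonovGradient L Γ α G y u₀ u
      + 1 / 2 * ((G *ᵥ d) ⬝ᵥ (L *ᵥ (G *ᵥ d))) + 1 / (2 * α) * (d ⬝ᵥ (Γ *ᵥ d)) := by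
  have hres : y - G *ᵥ (u + d) = (y - G *ᵥ u) + -(G *ᵥ d) := by
    rw [mulVec_add]; abel
  have hdev : u + d - u₀ = (u - u₀) + d := by abel
  have hcross : (G *ᵥ d) ⬝ᵥ (L *ᵥ (y - G *ᵥ u)) = d ⬝ᵥ ((Gᵀ * L) *ᵥ (y - G *ᵥ u)) := by
    rw [← mulVec_mulVec, dotProduct_transpose_mulVec, dotProduct_comm]
  simp only [tikhonovObjective, tikhonovGradient, hres, hdev, hL.add_dotProduct_mulVec_add,
    hΓ.add_dotProduct_mulVec_add, neg_dotProduct, mulVec_neg, dotProduct_neg, neg_neg, hcross,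
    dotProduct_sub, dotProduct_smul, smul_eq_mul]
  ring

theorem tikhonovGradient_eq_zero (hα : α ≠ 0) {u : ι → ℝ}
    (hu : (Γ + α • (Gᵀ * L * G)) *ᵥ u = Γ *ᵥ u₀ + α • ((Gᵀ * L) *ᵥ y)) :
    tikhonovGradient L Γ α G y u₀ u = 0 := by
  have hdev : Γ *ᵥ (u - u₀) = α • ((Gᵀ * L) *ᵥ (y - G *ᵥ u)) := by
    rw [add_mulVec, smul_mulVec] at hu
    rw [mulVec_sub, mulVec_sub, smul_sub, mulVec_mulVec]
    linear_combination (norm := module) hu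
  rw [tikhonovGradient, hdev, smul_smul, inv_mul_cancel₀ hα, one_smul, sub_self]

theorem posDef_add_smul_transpose_mul_mul (hΓ : Γ.PosDef) (hL : L.PosSemidef) (hα : 0 ≤ α) :
    (Γ + α • (Gᵀ * L * G)).PosDef :=
  hΓ.add_posSemidef <| by
    simpa only [conjTranspose_eq_transpose_of_trivial] using
      (hL.conjTranspose_mul_mul_same G).smul hα

theorem mulVec_tikhonovSolution [DecidableEq ι] (hΓ : Γ.PosDef) (hL : L.PosSemidef) (hα : 0 ≤ α) :
    (Γ + α • (Gᵀ * L * G)) *ᵥ tikhonovSolution L Γ α G y u₀ = Γ *ᵥ u₀ + α • ((Gᵀ * L) *ᵥ y) := by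
  have hA := (posDef_add_smul_transpose_mul_mul (G := G) hΓ hL hα).isUnit
  rw [tikhonovSolution, mulVec_mulVec, mul_nonsing_inv _ ((isUnit_iff_isUnit_det _).1 hA),
    one_mulVec]

theorem tikhonovObjective_tikhonovSolution_lt [DecidableEq ι] (hΓ : Γ.PosDef) (hL : L.PosSemidef)
    (hα : 0 < α) {u : ι → ℝ} (hu : u ≠ tikhonovSolution L Γ α G y u₀) :
    tikhonovObjective L Γ α G y u₀ (tikhonovSolution L Γ α G y u₀) <
      tikhonovObjective L Γ α G y u₀ u := by
  set u' := tikhonovSolution L Γ α G y u₀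
  obtain ⟨d, rfl⟩ : ∃ d, u = u' + d := ⟨u - u', by abel⟩
  have hd : d ≠ 0 := by rintro rfl; simp at hu
  have hgrad : tikhonovGradient L Γ α G y u₀ u' = 0 :=
    tikhonovGradient_eq_zero hα.ne' (mulVec_tikhonovSolution hΓ hL hα.le)
  rw [tikhonovObjective_add (isHermitian_iff_isSymm.1 hL.isHermitian)
    (isHermitian_iff_isSymm.1 hΓ.isHermitian), hgrad, dotProduct_zero, add_zero]
  have hdata : 0 ≤ 1 / 2 * ((G *ᵥ d) ⬝ᵥ (L *ᵥ (G *ᵥ d))) :=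
    mul_nonneg (by norm_num) (by simpa using hL.dotProduct_mulVec_nonneg (G *ᵥ d))
  have hprior : 0 < 1 / (2 * α) * (d ⬝ᵥ (Γ *ᵥ d)) :=
    mul_pos (by positivity) (by simpa using hΓ.dotProduct_mulVec_pos hd)
  linarith

end Tikhonov

theorem mcDNN_numerator_eq_normal_rhs {ι κ τ R : Type*} [Fintype ι] [Fintype κ] [Fintype τ]
    [DecidableEq ι] [DecidableEq κ] [CommRing R] {Γ : Matrix ι ι R} (hΓ : IsUnit Γ.det)
    (L : Matrix κ κ R) (G : Matrix κ ι R) (α : R) (Pbar : Matrix ι τ R) (Ybar : Matrix κ τ R)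
    (Yd : Matrix τ κ R) (ubar : ι → R) (ybar y : κ → R) :
    (Γ⁻¹ * Pbar * Yd + α • (Gᵀ * L * Ybar * Yd)) *ᵥ y
        + (Γ⁻¹ *ᵥ ubar + α • ((Gᵀ * L) *ᵥ ybar)
          - (Γ⁻¹ * Pbar * Yd + α • (Gᵀ * L * Ybar * Yd)) *ᵥ ybar) =
      Γ⁻¹ *ᵥ (ubar + (Pbar * Yd) *ᵥ (y - ybar)
          - α • ((Γ * Gᵀ * L * (1 - Ybar * Yd)) *ᵥ (y - ybar)))
        + α • ((Gᵀ * L) *ᵥ y) := by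
  have hcancel : Γ⁻¹ * (Γ * Gᵀ * L * (1 - Ybar * Yd)) = Gᵀ * L * (1 - Ybar * Yd) := by
    simp only [← Matrix.mul_assoc, nonsing_inv_mul Γ hΓ, Matrix.one_mul]
  rw [mulVec_sub, mulVec_add, mulVec_smul, mulVec_mulVec, mulVec_mulVec, hcancel]
  simp only [add_mulVec, sub_mulVec, smul_mulVec, Matrix.mul_sub, Matrix.mul_one, mulVec_sub,
    smul_sub, Matrix.mul_assoc]
  module

theorem mcDNN_solution_is_tikhonov_minimizer_general
    {m n nt : ℕ} (G : Matrix (Fin n) (Fin m) ℝ)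
    (Gam : Matrix (Fin m) (Fin m) ℝ) (Lam : Matrix (Fin n) (Fin n) ℝ)
    (hGam : Gam.PosDef) (hLam : Lam.PosDef)
    (α : ℝ) (hα : 0 < α)
    (ubar : Fin m → ℝ) (ybar : Fin n → ℝ)
    (Pbar : Matrix (Fin m) (Fin nt) ℝ) (Ybar : Matrix (Fin n) (Fin nt) ℝ)
    (Yd : Matrix (Fin nt) (Fin n) ℝ)
    (A : Matrix (Fin m) (Fin m) ℝ) (hA : A = Gam⁻¹ + α • (Gᵀ * Lam⁻¹ * G))
    (WI : Matrix (Fin m) (Fin n) ℝ)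
    (hWI : WI = A⁻¹ * (Gam⁻¹ * Pbar * Yd + α • (Gᵀ * Lam⁻¹ * Ybar * Yd)))
    (bI : Fin m → ℝ)
    (hbI : bI = A⁻¹ *ᵥ (Gam⁻¹ *ᵥ ubar + α • ((Gᵀ * Lam⁻¹) *ᵥ ybar)
      - (Gam⁻¹ * Pbar * Yd + α • (Gᵀ * Lam⁻¹ * Ybar * Yd)) *ᵥ ybar))
    (y : Fin n → ℝ)
    (u0 : Fin m → ℝ)
    (hu0 : u0 = ubar + (Pbar * Yd) *ᵥ (y - ybar)
      - α • ((Gam * Gᵀ * Lam⁻¹ * (1 - Ybar * Yd)) *ᵥ (y - ybar)))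
    (F : (Fin m → ℝ) → ℝ)
    (hF : ∀ u, F u =
      (1 / 2) * ((y - G *ᵥ u) ⬝ᵥ (Lam⁻¹ *ᵥ (y - G *ᵥ u))) +
      (1 / (2 * α)) * ((u - u0) ⬝ᵥ (Gam⁻¹ *ᵥ (u - u0)))) :
    ∀ u : Fin m → ℝ, u ≠ WI *ᵥ y + bI → F (WI *ᵥ y + bI) < F u := by
  have hsol : WI *ᵥ y + bI = tikhonovSolution Lam⁻¹ Gam⁻¹ α G y u0 := by
    rw [tikhonovSolution, ← hA, hWI, hbI, hu0, ← mulVec_mulVec, ← mulVec_add,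
      mcDNN_numerator_eq_normal_rhs ((isUnit_iff_isUnit_det _).1 hGam.isUnit)]
  have hJ : F = tikhonovObjective Lam⁻¹ Gam⁻¹ α G y u0 := funext hF
  rw [hsol, hJ]
  exact fun u hu => tikhonovObjective_tikhonovSolution_lt hGam.inv hLam.inv.posSemidef hα hu

/-- The mcDNN inverse solution `Wᴵ y + bᴵ` is exactly the unique global
minimizer of the Tikhonov-regularized functional with the data-informed
reference parameter `u₀`. -/
theorem mcDNN_solution_is_tikhonov_minimizer
    {m n nt : ℕ} (hm : 0 < m) (hn : 0 < n) (hnt : 0 < nt)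
    (P : Matrix (Fin m) (Fin nt) ℝ) (Y : Matrix (Fin n) (Fin nt) ℝ)
    (G : Matrix (Fin n) (Fin m) ℝ)
    (Gam : Matrix (Fin m) (Fin m) ℝ) (Lam : Matrix (Fin n) (Fin n) ℝ)
    (hGam : Gam.PosDef) (hLam : Lam.PosDef)
    (α : ℝ) (hα : 0 < α)
    (ubar : Fin m → ℝ) (hubar : ubar = (nt : ℝ)⁻¹ • (P *ᵥ 1))
    (ybar : Fin n → ℝ) (hybar : ybar = (nt : ℝ)⁻¹ • (Y *ᵥ 1))
    (Pbar : Matrix (Fin m) (Fin nt) ℝ) (hPbar : Pbar = P - vecMulVec ubar 1)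
    (Ybar : Matrix (Fin n) (Fin nt) ℝ) (hYbar : Ybar = Y - vecMulVec ybar 1)
    (Yd : Matrix (Fin nt) (Fin n) ℝ)
    (hYd1 : Ybar * Yd * Ybar = Ybar) (hYd2 : Yd * Ybar * Yd = Yd)
    (hYd3 : (Ybar * Yd)ᵀ = Ybar * Yd) (hYd4 : (Yd * Ybar)ᵀ = Yd * Ybar)
    (A : Matrix (Fin m) (Fin m) ℝ) (hA : A = Gam⁻¹ + α • (Gᵀ * Lam⁻¹ * G))
    (WI : Matrix (Fin m) (Fin n) ℝ)
    (hWI : WI = A⁻¹ * (Gam⁻¹ * Pbar * Yd + α • (Gᵀ * Lam⁻¹ * Ybar * Yd)))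
    (bI : Fin m → ℝ)
    (hbI : bI = A⁻¹ *ᵥ (Gam⁻¹ *ᵥ ubar + α • ((Gᵀ * Lam⁻¹) *ᵥ ybar)
      - (Gam⁻¹ * Pbar * Yd + α • (Gᵀ * Lam⁻¹ * Ybar * Yd)) *ᵥ ybar))
    (y : Fin n → ℝ)
    (u0 : Fin m → ℝ)
    (hu0 : u0 = ubar + (Pbar * Yd) *ᵥ (y - ybar)
      - α • ((Gam * Gᵀ * Lam⁻¹ * (1 - Ybar * Yd)) *ᵥ (y - ybar)))
    (F : (Fin m → ℝ) → ℝ)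
    (hF : ∀ u, F u =
      (1 / 2) * ((y - G *ᵥ u) ⬝ᵥ (Lam⁻¹ *ᵥ (y - G *ᵥ u))) +
      (1 / (2 * α)) * ((u - u0) ⬝ᵥ (Gam⁻¹ *ᵥ (u - u0)))) :
    ∀ u : Fin m → ℝ, u ≠ WI *ᵥ y + bI → F (WI *ᵥ y + bI) < F u :=
  mcDNN_solution_is_tikhonov_minimizer_general G Gam Lam hGam hLam α hα ubar ybar Pbar Ybar Yd A hA
    WI hWI bI hbI y u0 hu0 F hF
end
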